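/- arXiv:2009.02758 — 2 statements merged into one kernel-verified Lean document; each statement's English description precedes it below -/
import Mathlib

section
/- Fix a positive integer k. Let A₁, …, A_k ⊆ ℕ₀² be finite and non-empty, and choose an integer m > k · max{a : (a, y) ∈ A_i or (x, a) ∈ A_i for some 1 ≤ i ≤ k and some x, y} (m exceeds k times the largest coordinate appearing in any A_i). Let C = A₁ + m·A₂ + m²·A₃ + ⋯ + m^{k−1}·A_k, where m^j·A denotes scalar dilation by m^j. Then |sC − dC| = ∏_{j=1}^{k} |sA_j − dA_j| for all non-negative integers s, d with 1 ≤ s + d ≤ k. -/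
open Pointwise

/-- The `n`-fold iterated sumset: `iterSum 0 A = {0}`, `iterSum (n+1) A = A + iterSum n A`. -/
def iterSum {G : Type*} [AddCommGroup G] [DecidableEq G] : ℕ → Finset G → Finset G
  | 0, _ => {0}
  | n + 1, A => A + iterSum n A

/-- `sdSet s d A` is the generalized sumset `sA - dA`. -/
def sdSet {G : Type*} [AddCommGroup G] [DecidableEq G] (s d : ℕ) (A : Finset G) : Finset G :=
  iterSum s A - iterSum d A

/-!
The operation `A ↦ sA - dA` is additive on finite sets and commutes with the additive maps
`p ↦ m ^ i • p`, so `sC - dC = ∑ i, m ^ i • (sA_i - dA_i)`. Two points of `sA_i - dA_i`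
differ, coordinatewise, by at most `(s + d) · max A_i < m`. Hence two choices of summands with
the same sum differ by a base-`m` expansion of `0` with digits in `(-m, m)`, which forces them
to agree, and the sum has `∏ i, |sA_i - dA_i|` elements.
-/

open Finset

section Sumsets

variable {G H : Type*} [AddCommGroup G] [DecidableEq G] [AddCommGroup H] [DecidableEq H]

lemma iterSum_eq_nsmul (n : ℕ) (A : Finset G) : iterSum n A = n • A := by
  induction n with
  | zero => rfl
  | succ n ih => rw [iterSum, ih, succ_nsmul']

lemma sdSet_eq_nsmul_sub_nsmul (s d : ℕ) (A : Finset G) : sdSet s d A = s • A - d • A := by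
  rw [sdSet, iterSum_eq_nsmul, iterSum_eq_nsmul]

lemma sdSet_sum {ι : Type*} (s d : ℕ) (I : Finset ι) (A : ι → Finset G) :
    sdSet s d (∑ i ∈ I, A i) = ∑ i ∈ I, sdSet s d (A i) := by
  simp only [sdSet_eq_nsmul_sub_nsmul, sum_sub_distrib, sum_nsmul]

lemma sdSet_image {F : Type*} [FunLike F G H] [AddMonoidHomClass F G H] (f : F) (s d : ℕ)
    (A : Finset G) : sdSet s d (A.image f) = (sdSet s d A).image f := by
  rw [sdSet_eq_nsmul_sub_nsmul, sdSet_eq_nsmul_sub_nsmul, ← image_nsmul, ← image_nsmul]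
  exact (image_image₂_distrib (map_sub f)).symm

lemma map_mem_sdSet_image {F : Type*} [FunLike F G H] [AddMonoidHomClass F G H] (f : F)
    {s d : ℕ} {A : Finset G} {x : G} (hx : x ∈ sdSet s d A) :
    f x ∈ sdSet s d (A.image f) := by
  rw [sdSet_image]
  exact mem_image_of_mem f hx

end Sumsets

lemma sum_eq_image_piFinset {ι M : Type*} [Fintype ι] [DecidableEq ι] [AddCommMonoid M]
    [DecidableEq M] (A : ι → Finset M) :
    ∑ i, A i = (Fintype.piFinset A).image (fun g => ∑ i, g i) := by
  ext x
  rw [← mem_coe, coe_sum, Set.mem_fintype_sum, mem_image]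
  simp only [Fintype.mem_piFinset, mem_coe, exists_prop]

lemma card_sum_image_of_injOn {ι G M : Type*} [Fintype ι] [DecidableEq ι] [AddCommMonoid M]
    [DecidableEq M] (A : ι → Finset G) (f : ι → G → M)
    (hf : Set.InjOn (fun g : ι → G => ∑ i, f i (g i)) (Fintype.piFinset A)) :
    (∑ i, (A i).image (f i)).card = ∏ i, (A i).card := by
  rw [sum_eq_image_piFinset, Fintype.piFinset_image, image_image]
  exact (card_image_of_injOn hf).trans (Fintype.card_piFinset A)

lemma nsmul_subset_Icc {α : Type*} [AddMonoid α] [Preorder α] [AddLeftMono α]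
    [AddRightMono α] [LocallyFiniteOrder α] [DecidableEq α] {A : Finset α} {a b : α}
    (h : A ⊆ Icc a b) (n : ℕ) :
    n • A ⊆ Icc (n • a) (n • b) := by
  induction n with
  | zero => simp
  | succ n ih =>
      simp only [succ_nsmul]
      exact (add_subset_add ih h).trans (Icc_add_Icc_subset _ _ _ _)

lemma abs_sub_le_of_mem_sdSet {A : Finset ℤ} {M : ℤ} (hA : A ⊆ Icc 0 M) {s d : ℕ}
    {x y : ℤ} (hx : x ∈ sdSet s d A) (hy : y ∈ sdSet s d A) : |x - y| ≤ (s + d) * M := by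
  rw [sdSet_eq_nsmul_sub_nsmul] at hx hy
  obtain ⟨u, hu, v, hv, rfl⟩ := mem_sub.1 hx
  obtain ⟨u', hu', v', hv', rfl⟩ := mem_sub.1 hy
  have bound : ∀ {n : ℕ} {w : ℤ}, w ∈ n • A → 0 ≤ w ∧ w ≤ n * M := fun hw => by
    simpa using mem_Icc.1 (nsmul_subset_Icc hA _ hw)
  obtain ⟨⟨hu₀, hu₁⟩, ⟨hv₀, hv₁⟩⟩ := And.intro (bound hu) (bound hv)
  obtain ⟨⟨hu₀', hu₁'⟩, ⟨hv₀', hv₁'⟩⟩ := And.intro (bound hu') (bound hv')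
  rw [abs_le, add_mul]
  constructor <;> linarith

lemma abs_map_sub_le_of_mem_sdSet {G : Type*} [AddCommGroup G] [DecidableEq G] (f : G →+ ℤ)
    {A : Finset G} {M : ℤ} (hA : ∀ a ∈ A, f a ∈ Icc 0 M) {s d : ℕ} {x y : G}
    (hx : x ∈ sdSet s d A) (hy : y ∈ sdSet s d A) : |f x - f y| ≤ (s + d) * M :=
  abs_sub_le_of_mem_sdSet (image_subset_iff.2 hA) (map_mem_sdSet_image f hx)
    (map_mem_sdSet_image f hy)

namespace Int

lemma eq_zero_of_sum_pow_mul_eq_zero {m : ℤ} :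
    ∀ {k : ℕ} {z : Fin k → ℤ}, (∀ i, |z i| < m) →
      ∑ i : Fin k, m ^ (i : ℕ) * z i = 0 → z = 0
  | 0, _, _, _ => Subsingleton.elim _ _
  | k + 1, z, hz, hsum => by
      have hsplit : ∑ i : Fin (k + 1), m ^ (i : ℕ) * z i =
          z 0 + m * ∑ i : Fin k, m ^ (i : ℕ) * z i.succ := by
        simp only [Fin.sum_univ_succ, mul_sum, Fin.val_zero, pow_zero, one_mul, Fin.val_succ,
          pow_succ, mul_assoc, mul_left_comm m]
      rw [hsplit] at hsum
      have hz₀ : z 0 = 0 :=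
        eq_zero_of_abs_lt_dvd ⟨-∑ i : Fin k, m ^ (i : ℕ) * z i.succ, by linarith⟩ (hz 0)
      have hm : m ≠ 0 := ((abs_nonneg _).trans_lt (hz 0)).ne'
      rw [hz₀, zero_add, mul_eq_zero, or_iff_right hm] at hsum
      have htail := eq_zero_of_sum_pow_mul_eq_zero (fun i => hz i.succ) hsum
      funext i
      exact Fin.cases hz₀ (fun i => congrFun htail i) i

lemma eq_of_sum_pow_mul_eq {m : ℤ} {k : ℕ} {x y : Fin k → ℤ} (hxy : ∀ i, |x i - y i| < m)
    (h : ∑ i : Fin k, m ^ (i : ℕ) * x i = ∑ i : Fin k, m ^ (i : ℕ) * y i) : x = y := by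
  have hdiff := eq_zero_of_sum_pow_mul_eq_zero (z := x - y) hxy (by
    simp only [Pi.sub_apply, mul_sub, sum_sub_distrib, h, sub_self])
  exact sub_eq_zero.1 hdiff

end Int

lemma eq_of_sum_pow_smul_eq {m : ℤ} {k : ℕ} {x y : Fin k → ℤ × ℤ}
    (h₁ : ∀ i, |(x i).1 - (y i).1| < m) (h₂ : ∀ i, |(x i).2 - (y i).2| < m)
    (h : ∑ i : Fin k, m ^ (i : ℕ) • x i = ∑ i : Fin k, m ^ (i : ℕ) • y i) : x = y := by
  have e₁ := congrArg Prod.fst h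
  have e₂ := congrArg Prod.snd h
  simp only [Prod.fst_sum, Prod.snd_sum, Prod.smul_fst, Prod.smul_snd, smul_eq_mul] at e₁ e₂
  funext i
  exact Prod.ext (congrFun (Int.eq_of_sum_pow_mul_eq h₁ e₁) i)
    (congrFun (Int.eq_of_sum_pow_mul_eq h₂ e₂) i)

theorem stmt7 (k : ℕ) (hk : 0 < k) (A : Fin k → Finset (ℤ × ℤ))
    (hA : ∀ i, (A i).Nonempty)
    (hAnn : ∀ i, ∀ p ∈ A i, 0 ≤ p.1 ∧ 0 ≤ p.2)
    (m : ℤ) (hm : ∀ i, ∀ p ∈ A i, (k : ℤ) * p.1 < m ∧ (k : ℤ) * p.2 < m)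
    (C : Finset (ℤ × ℤ))
    (hC : C = ∑ i : Fin k, (A i).image (fun p => (m ^ (i : ℕ) * p.1, m ^ (i : ℕ) * p.2))) :
    ∀ s d : ℕ, 1 ≤ s + d → s + d ≤ k →
      (sdSet s d C).card = ∏ i : Fin k, (sdSet s d (A i)).card := by
  intro s d _ hsdk
  set M := (m - 1) / k
  have hkpos : (0 : ℤ) < k := by exact_mod_cast hk
  have hIcc : ∀ {t : ℤ}, 0 ≤ t → k * t < m → t ∈ Icc 0 M := fun h₀ h₁ =>
    mem_Icc.2 ⟨h₀, Int.le_ediv_of_mul_le hkpos (by linarith)⟩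
  have hcoord : ∀ i, ∀ p ∈ A i, p.1 ∈ Icc 0 M ∧ p.2 ∈ Icc 0 M := fun i p hp =>
    ⟨hIcc (hAnn i p hp).1 (hm i p hp).1, hIcc (hAnn i p hp).2 (hm i p hp).2⟩
  have hM : 0 ≤ M := by
    obtain ⟨p, hp⟩ := hA ⟨0, hk⟩
    obtain ⟨h₀, h₁⟩ := mem_Icc.1 (hcoord _ p hp).1
    exact h₀.trans h₁
  have hspread : (s + d : ℤ) * M < m := calc
    (s + d : ℤ) * M ≤ k * M := mul_le_mul_of_nonneg_right (by exact_mod_cast hsdk) hM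
    _ ≤ m - 1 := Int.mul_ediv_self_le hkpos.ne'
    _ < m := sub_one_lt m
  have hclose : ∀ i, ∀ x ∈ sdSet s d (A i), ∀ y ∈ sdSet s d (A i),
      |x.1 - y.1| < m ∧ |x.2 - y.2| < m := fun i x hx y hy =>
    ⟨(abs_map_sub_le_of_mem_sdSet (.fst ℤ ℤ) (fun p hp => (hcoord i p hp).1) hx hy).trans_lt
        hspread,
      (abs_map_sub_le_of_mem_sdSet (.snd ℤ ℤ) (fun p hp => (hcoord i p hp).2) hx hy).trans_lt
        hspread⟩
  have hdilate : ∀ i : Fin k, (fun p : ℤ × ℤ => (m ^ (i : ℕ) * p.1, m ^ (i : ℕ) * p.2)) =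
      DistribSMul.toAddMonoidHom (ℤ × ℤ) (m ^ (i : ℕ)) := fun _ => rfl
  simp only [hC, hdilate, sdSet_sum, sdSet_image]
  refine card_sum_image_of_injOn _ _ fun x hx y hy hxy => ?_
  simp only [mem_coe, Fintype.mem_piFinset] at hx hy
  exact eq_of_sum_pow_smul_eq (fun i => (hclose i _ (hx i) _ (hy i)).1)
    (fun i => (hclose i _ (hx i) _ (hy i)).2) hxy
end

section
/- Let A = {(a₁, b₁), (a₂, b₂), …, (a_m, b_m)} ⊆ ℕ₀² be a finite set of lattice points with non-negative coordinates. Let a be the smallest non-zero value among the a_i, let a' be the largest a_i, let b be the smallest non-zero value among the b_i, let b' be the largest b_i, and set N = max{2a'², 2b'²}. Suppose gcd(a, a') = 1, gcd(b, b') = 1, and {(0,0), (a,0), (0,b), (a',0), (0,b'), (a,b), (a,b'), (a',b), (a',b')} ⊆ A. Then for every integer k ≥ N, |kA − kA| ≥ |kA + kA|. In particular, A is not k-generational for every k: it is not the case that |kA + kA| > |kA − kA| for all k ∈ ℕ. -/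
open Pointwise

/-!
Every `u ∈ kA + kA` is the sum of a multiset `s` of `2k` points of `A`, and we show that
`u - (ka', kb') ∈ kA - kA`; translation then injects `kA + kA` into `kA - kA`.
Since `A` contains the grid `X × Y`, `X = {0, a, a'}`, `Y = {0, b, b'}`, it suffices to split
`s = S + R` with `|S| + i = k` such that the coordinate sums of `R`, shifted by `-ka'` and `-kb'`,
lie in `iX - kX` and `iY - kY`: the minuend is then `S.sum` plus a point of `i(X × Y) ⊆ iA`.
As `a, a'` are coprime, `jX - kX` contains every integer of `[-(k - a)a', (j - a)a']`, which
settles the case `S = 0` unless a coordinate sum of `s` lies within `a'²` (resp. `b'²`) of its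
extreme values `0` and `2ka'`. In that case all but at most `a'²` points of `s` share the first
coordinate `0` or `a'`; these exceptional points go into `S`, and the second coordinates of the
remaining points are treated in the same way with the threshold `bb'`.
-/

lemma iterSum_eq_nsmul_s11 {G : Type*} [AddCommGroup G] [DecidableEq G] (A : Finset G) :
    ∀ k, iterSum k A = k • A
  | 0 => by rw [zero_nsmul]; rfl
  | k + 1 => by rw [iterSum, iterSum_eq_nsmul_s11 A k, succ_nsmul']

namespace Finset

variable {G : Type*} [AddCommMonoid G] [DecidableEq G] {A : Finset G}

lemma multiset_sum_mem_nsmul {s : Multiset G} (hs : ∀ x ∈ s, x ∈ A) :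
    s.sum ∈ Multiset.card s • A := by
  induction s using Multiset.induction_on with
  | empty => simp
  | cons x s ih =>
    rw [Multiset.forall_mem_cons] at hs
    rw [Multiset.sum_cons, Multiset.card_cons, succ_nsmul']
    exact add_mem_add hs.1 (ih hs.2)

lemma exists_multiset_of_mem_nsmul {n : ℕ} {u : G} (hu : u ∈ n • A) :
    ∃ s : Multiset G, Multiset.card s = n ∧ (∀ x ∈ s, x ∈ A) ∧ s.sum = u := by
  induction n generalizing u with
  | zero =>
    rw [zero_nsmul, mem_zero] at hu
    exact ⟨0, rfl, by simp, hu.symm⟩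
  | succ n ih =>
    rw [succ_nsmul'] at hu
    obtain ⟨x, hx, v, hv, rfl⟩ := mem_add.mp hu
    obtain ⟨s, hcard, hs, rfl⟩ := ih hv
    exact ⟨x ::ₘ s, by simp [hcard], Multiset.forall_mem_cons.mpr ⟨hx, hs⟩, Multiset.sum_cons x s⟩

lemma nsmul_mem_nsmul_of_le (h₀ : 0 ∈ A) {x : G} (hx : x ∈ A) {m n : ℕ} (h : m ≤ n) :
    m • x ∈ n • A := by
  obtain ⟨r, rfl⟩ := Nat.exists_eq_add_of_le h
  rw [add_nsmul, ← add_zero (m • x)]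
  exact add_mem_add (nsmul_mem_nsmul hx) (zero_mem_nsmul h₀)

end Finset

lemma Multiset.card_filter_le_sum_map {α : Type*} (s : Multiset α) (p : α → Prop) [DecidablePred p]
    (g : α → ℤ) (h0 : ∀ x ∈ s, 0 ≤ g x) (h1 : ∀ x ∈ s, p x → 1 ≤ g x) :
    (card (s.filter p) : ℤ) ≤ (s.map g).sum := by
  induction s using Multiset.induction_on with
  | empty => simp
  | cons x s ih =>
    rw [Multiset.forall_mem_cons] at h0 h1
    have := ih h0.2 h1.2
    by_cases hx : p x
    · simp only [filter_cons_of_pos _ hx, card_cons, map_cons, sum_cons]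
      push_cast
      linarith [h1.1 hx]
    · simp only [filter_cons_of_neg _ hx, map_cons, sum_cons]
      linarith [h0.1]

section Line

variable {a a' : ℤ}

lemma IsCoprime.exists_add_mul_dvd (h : IsCoprime a a') (ha' : 0 < a') (t : ℤ) :
    ∃ c, 0 ≤ c ∧ c < a' ∧ a' ∣ t + c * a := by
  obtain ⟨u, v, huv⟩ := h
  refine ⟨-t * u % a', Int.emod_nonneg _ ha'.ne', Int.emod_lt_of_pos _ ha', ?_⟩
  have : t + -t * u % a' * a ≡ t * v * a' [ZMOD a'] :=
    calc t + -t * u % a' * a ≡ t + -t * u * a [ZMOD a'] :=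
          ((Int.mod_modEq _ _).mul_right a).add_left t
      _ = t * v * a' := by linear_combination (-t) * huv
  exact Int.modEq_zero_iff_dvd.mp (this.trans (Int.modEq_zero_iff_dvd.mpr (dvd_mul_left _ _)))

lemma mem_nsmul_sub_nsmul_of_nonneg (ha : 0 < a) (ha' : 0 < a') (hco : IsCoprime a a') {j k : ℕ}
    (hk : a' ≤ k) {t : ℤ} (ht₀ : 0 ≤ t) (ht : t ≤ (j - a) * a') :
    t ∈ j • ({0, a, a'} : Finset ℤ) - k • ({0, a, a'} : Finset ℤ) := by
  obtain ⟨c, hc₀, hca', q, hq⟩ := hco.exists_add_mul_dvd ha' t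
  have hq₀ : 0 ≤ q := by nlinarith
  have hqj : q ≤ j := by nlinarith
  lift q to ℕ using hq₀
  lift c to ℕ using hc₀
  refine Finset.mem_sub.mpr ⟨q • a', Finset.nsmul_mem_nsmul_of_le (by simp) (by simp) (by omega),
    c • a, Finset.nsmul_mem_nsmul_of_le (by simp) (by simp) (by omega), ?_⟩
  simp only [nsmul_eq_mul]
  linarith

lemma mem_nsmul_sub_nsmul (ha : 0 < a) (ha' : 0 < a') (hco : IsCoprime a a') {j k : ℕ}
    (hj : a' ≤ j) (hk : a' ≤ k) {t : ℤ} (h₁ : -((k - a) * a') ≤ t) (h₂ : t ≤ (j - a) * a') :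
    t ∈ j • ({0, a, a'} : Finset ℤ) - k • ({0, a, a'} : Finset ℤ) := by
  rcases le_total 0 t with ht | ht
  · exact mem_nsmul_sub_nsmul_of_nonneg ha ha' hco hk ht h₂
  · obtain ⟨x, hx, y, hy, hxy⟩ := Finset.mem_sub.mp
      (mem_nsmul_sub_nsmul_of_nonneg ha ha' hco hj (neg_nonneg.mpr ht) (by linarith))
    exact Finset.mem_sub.mpr ⟨y, hy, x, hx, by linarith⟩

variable {α : Type*}

lemma sum_map_sub_mem_of_forall_eq {R : Multiset α} {f : α → ℤ} {e : ℤ} (he : e = 0 ∨ e = a')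
    (hR : ∀ x ∈ R, f x = e) {j k : ℕ} (hcard : Multiset.card R = j + k) :
    (R.map f).sum - k * a' ∈ j • ({0, a, a'} : Finset ℤ) - k • ({0, a, a'} : Finset ℤ) := by
  have hsum : (R.map f).sum = (j + k) * e := by
    rw [Multiset.map_congr rfl hR, Multiset.map_const', Multiset.sum_replicate, hcard,
      nsmul_eq_mul]
    push_cast
    ring
  rcases he with rfl | rfl
  · refine Finset.mem_sub.mpr ⟨0, Finset.zero_mem_nsmul (by simp),
      k • a', Finset.nsmul_mem_nsmul (by simp), ?_⟩
    rw [hsum, nsmul_eq_mul]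
    ring
  · refine Finset.mem_sub.mpr ⟨j • e, Finset.nsmul_mem_nsmul (by simp),
      0, Finset.zero_mem_nsmul (by simp), ?_⟩
    rw [hsum, nsmul_eq_mul]
    ring

lemma exists_add_eq_forall_eq_of_extreme (s : Multiset α) (f : α → ℤ) (ha : 0 < a) (haa' : a ≤ a')
    (hf : ∀ x ∈ s, f x = 0 ∨ a ≤ f x ∧ f x ≤ a') {D : ℤ}
    (hD : (s.map f).sum ≤ D ∨ Multiset.card s * a' - (s.map f).sum ≤ D) :
    ∃ S R, S + R = s ∧ (Multiset.card S : ℤ) ≤ D ∧ ∃ e, (e = 0 ∨ e = a') ∧ ∀ x ∈ R, f x = e := by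
  classical
  rcases hD with hD | hD
  · refine ⟨s.filter (f · ≠ 0), s.filter (¬ f · ≠ 0), Multiset.filter_add_not _ _, ?_, 0,
      .inl rfl, fun x hx => not_not.mp (Multiset.mem_filter.mp hx).2⟩
    refine (Multiset.card_filter_le_sum_map s _ f (fun x hx => ?_) (fun x hx hx0 => ?_)).trans hD
    · rcases hf x hx with h | h <;> omega
    · rcases hf x hx with h | h <;> omega
  · refine ⟨s.filter (f · ≠ a'), s.filter (¬ f · ≠ a'), Multiset.filter_add_not _ _, ?_, a',
      .inr rfl, fun x hx => not_not.mp (Multiset.mem_filter.mp hx).2⟩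
    have := Multiset.card_filter_le_sum_map s (f · ≠ a') (fun x => a' - f x)
      (fun x hx => by rcases hf x hx with h | h <;> omega)
      (fun x hx hxa => by rcases hf x hx with h | h <;> omega)
    rw [Multiset.sum_map_sub, Multiset.map_const', Multiset.sum_replicate, nsmul_eq_mul] at this
    linarith

lemma exists_add_eq_sum_map_sub_mem (R : Multiset α) (f : α → ℤ) (ha : 0 < a) (haa' : a ≤ a')
    (hco : IsCoprime a a') (hf : ∀ x ∈ R, f x = 0 ∨ a ≤ f x ∧ f x ≤ a') {j k : ℕ}
    (hcard : Multiset.card R = j + k) (hj : a * a' ≤ j) (hk : a' ≤ k) :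
    ∃ S R', S + R' = R ∧ ∃ i, Multiset.card S + i = j ∧
      (R'.map f).sum - k * a' ∈ i • ({0, a, a'} : Finset ℤ) - k • ({0, a, a'} : Finset ℤ) := by
  by_cases hext : (R.map f).sum ≤ a * a' - 1 ∨ Multiset.card R * a' - (R.map f).sum ≤ a * a' - 1
  · obtain ⟨S, R', hSR, hS, e, he, hR'⟩ := exists_add_eq_forall_eq_of_extreme R f ha haa' hf hext
    obtain ⟨i, hi⟩ : ∃ i, j = Multiset.card S + i :=
      Nat.exists_eq_add_of_le (by exact_mod_cast (show (Multiset.card S : ℤ) ≤ j by linarith))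
    refine ⟨S, R', hSR, i, hi.symm, sum_map_sub_mem_of_forall_eq he hR' ?_⟩
    have := congrArg Multiset.card hSR
    rw [Multiset.card_add] at this
    omega
  · push Not at hext
    rw [hcard] at hext
    push_cast at hext
    have hexp : ∀ n : ℤ, (n - a) * a' = n * a' - a * a' := fun n => by ring
    refine ⟨0, R, zero_add R, j, zero_add j, mem_nsmul_sub_nsmul ha (by linarith) hco
      (by nlinarith) hk ?_ ?_⟩ <;> linarith [hexp k, hexp j]

end Line

section Plane

variable {A : Finset (ℤ × ℤ)} {a a' b b' : ℤ}

lemma multiset_sum_sub_mem_nsmul_sub_nsmul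
    (hG : ({0, a, a'} : Finset ℤ) ×ˢ ({0, b, b'} : Finset ℤ) ⊆ A) {S R : Multiset (ℤ × ℤ)}
    (hS : ∀ p ∈ S, p ∈ A) {i k : ℕ} (hk : Multiset.card S + i = k)
    (hx : (R.map Prod.fst).sum - k * a' ∈
      i • ({0, a, a'} : Finset ℤ) - k • ({0, a, a'} : Finset ℤ))
    (hy : (R.map Prod.snd).sum - k * b' ∈
      i • ({0, b, b'} : Finset ℤ) - k • ({0, b, b'} : Finset ℤ)) :
    (S + R).sum - (k * a', k * b') ∈ k • A - k • A := by
  obtain ⟨x₁, hx₁, x₂, hx₂, hx⟩ := Finset.mem_sub.mp hx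
  obtain ⟨y₁, hy₁, y₂, hy₂, hy⟩ := Finset.mem_sub.mp hy
  have hgrid (n : ℕ) :
      (n • ({0, a, a'} : Finset ℤ)) ×ˢ (n • ({0, b, b'} : Finset ℤ)) ⊆ n • A := by
    rw [← Finset.product_nsmul]
    exact Finset.nsmul_subset_nsmul_left hG
  refine Finset.mem_sub.mpr ⟨S.sum + (x₁, y₁), ?_, (x₂, y₂),
    hgrid k (Finset.mem_product.mpr ⟨hx₂, hy₂⟩), ?_⟩
  · rw [← hk, add_nsmul]
    exact Finset.add_mem_add (Finset.multiset_sum_mem_nsmul hS)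
      (hgrid i (Finset.mem_product.mpr ⟨hx₁, hy₁⟩))
  · have hR₁ := map_multiset_sum (AddMonoidHom.fst ℤ ℤ) R
    have hR₂ := map_multiset_sum (AddMonoidHom.snd ℤ ℤ) R
    simp only [AddMonoidHom.coe_fst, AddMonoidHom.coe_snd] at hR₁ hR₂
    ext <;> simp only [Multiset.sum_add, Prod.fst_sub, Prod.snd_sub, Prod.fst_add, Prod.snd_add]
    · linarith
    · linarith

lemma exists_add_eq_sum_map_sub_mem_of_extreme {α : Type*} (s : Multiset α) (f g : α → ℤ)
    (ha : 0 < a) (haa' : a ≤ a') (hb : 0 < b) (hbb' : b ≤ b') (hcob : IsCoprime b b')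
    (hf : ∀ x ∈ s, f x = 0 ∨ a ≤ f x ∧ f x ≤ a') (hg : ∀ x ∈ s, g x = 0 ∨ b ≤ g x ∧ g x ≤ b')
    {k : ℕ} (hcard : Multiset.card s = k + k) (hka : 2 * a' ^ 2 ≤ k) (hkb : 2 * b' ^ 2 ≤ k)
    (hext : (s.map f).sum ≤ a' ^ 2 ∨ Multiset.card s * a' - (s.map f).sum ≤ a' ^ 2) :
    ∃ S R, S + R = s ∧ ∃ i, Multiset.card S + i = k ∧
      (R.map f).sum - k * a' ∈ i • ({0, a, a'} : Finset ℤ) - k • ({0, a, a'} : Finset ℤ) ∧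
      (R.map g).sum - k * b' ∈ i • ({0, b, b'} : Finset ℤ) - k • ({0, b, b'} : Finset ℤ) := by
  obtain ⟨S₁, R₁, rfl, hS₁, e, he, hR₁⟩ := exists_add_eq_forall_eq_of_extreme s f ha haa' hf hext
  have hbb'₂ : b * b' ≤ b' ^ 2 := by nlinarith
  obtain ⟨j, hj⟩ : ∃ j, k = Multiset.card S₁ + j :=
    Nat.exists_eq_add_of_le (by exact_mod_cast (show (Multiset.card S₁ : ℤ) ≤ k by nlinarith))
  rw [Multiset.card_add] at hcard
  obtain ⟨S₂, R₂, rfl, i, rfl, hy⟩ := exists_add_eq_sum_map_sub_mem R₁ g hb hbb' hcob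
    (fun x hx => hg x (Multiset.mem_add.mpr (.inr hx))) (j := j) (k := k) (by omega)
    (by rw [hj] at hka hkb; push_cast at hka hkb; nlinarith) (by nlinarith)
  refine ⟨S₁ + S₂, R₂, add_assoc _ _ _, i, by rw [Multiset.card_add, add_assoc, hj], ?_, hy⟩
  refine sum_map_sub_mem_of_forall_eq he (fun x hx => hR₁ x (Multiset.mem_add.mpr (.inr hx))) ?_
  rw [Multiset.card_add] at hcard
  omega

lemma exists_add_eq_sum_fst_snd_sub_mem (s : Multiset (ℤ × ℤ)) (ha : 0 < a) (haa' : a ≤ a')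
    (hca : IsCoprime a a') (hb : 0 < b) (hbb' : b ≤ b') (hcb : IsCoprime b b')
    (hs : ∀ p ∈ s, (p.1 = 0 ∨ a ≤ p.1 ∧ p.1 ≤ a') ∧ (p.2 = 0 ∨ b ≤ p.2 ∧ p.2 ≤ b'))
    {k : ℕ} (hcard : Multiset.card s = k + k) (hka : 2 * a' ^ 2 ≤ k) (hkb : 2 * b' ^ 2 ≤ k) :
    ∃ S R, S + R = s ∧ ∃ i, Multiset.card S + i = k ∧
      (R.map Prod.fst).sum - k * a' ∈
        i • ({0, a, a'} : Finset ℤ) - k • ({0, a, a'} : Finset ℤ) ∧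
      (R.map Prod.snd).sum - k * b' ∈
        i • ({0, b, b'} : Finset ℤ) - k • ({0, b, b'} : Finset ℤ) := by
  have hf := fun p hp => (hs p hp).1
  have hg := fun p hp => (hs p hp).2
  by_cases hx : (s.map Prod.fst).sum ≤ a' ^ 2 ∨
      Multiset.card s * a' - (s.map Prod.fst).sum ≤ a' ^ 2
  · exact exists_add_eq_sum_map_sub_mem_of_extreme s _ _ ha haa' hb hbb' hcb hf hg hcard hka hkb hx
  by_cases hy : (s.map Prod.snd).sum ≤ b' ^ 2 ∨
      Multiset.card s * b' - (s.map Prod.snd).sum ≤ b' ^ 2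
  · obtain ⟨S, R, hSR, i, hi, hy, hx⟩ :=
      exists_add_eq_sum_map_sub_mem_of_extreme s _ _ hb hbb' ha haa' hca hg hf hcard hkb hka hy
    exact ⟨S, R, hSR, i, hi, hx, hy⟩
  push Not at hx hy
  rw [hcard] at hx hy
  push_cast at hx hy
  have hexp : ∀ (n c c' : ℤ), (n - c) * c' = n * c' - c * c' := fun _ _ _ => by ring
  refine ⟨0, s, zero_add s, k, zero_add k, ?_, ?_⟩
  · refine mem_nsmul_sub_nsmul ha (by linarith) hca (by nlinarith) (by nlinarith) ?_ ?_ <;>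
      nlinarith [hexp k a a']
  · refine mem_nsmul_sub_nsmul hb (by linarith) hcb (by nlinarith) (by nlinarith) ?_ ?_ <;>
      nlinarith [hexp k b b']

lemma card_nsmul_add_le_card_nsmul_sub (ha : 0 < a) (haa' : a ≤ a') (hca : IsCoprime a a')
    (hb : 0 < b) (hbb' : b ≤ b') (hcb : IsCoprime b b')
    (hA : ∀ p ∈ A, (p.1 = 0 ∨ a ≤ p.1 ∧ p.1 ≤ a') ∧ (p.2 = 0 ∨ b ≤ p.2 ∧ p.2 ≤ b'))
    (hG : ({0, a, a'} : Finset ℤ) ×ˢ ({0, b, b'} : Finset ℤ) ⊆ A)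
    {k : ℕ} (hka : 2 * a' ^ 2 ≤ k) (hkb : 2 * b' ^ 2 ≤ k) :
    (k • A + k • A).card ≤ (k • A - k • A).card := by
  refine Finset.card_le_card_of_injOn (· - (k * a', k * b')) (fun u hu => ?_)
    sub_left_injective.injOn
  rw [Finset.mem_coe, ← add_nsmul] at hu
  obtain ⟨s, hcard, hs, rfl⟩ := Finset.exists_multiset_of_mem_nsmul hu
  obtain ⟨S, R, rfl, i, hi, hx, hy⟩ := exists_add_eq_sum_fst_snd_sub_mem s ha haa' hca hb
    hbb' hcb (fun p hp => hA p (hs p hp)) hcard hka hkb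
  exact multiset_sum_sub_mem_nsmul_sub_nsmul hG
    (fun p hp => hs p (Multiset.mem_add.mpr (.inl hp))) hi hx hy

end Plane

theorem stmt11_general (A : Finset (ℤ × ℤ)) (a a' b b' : ℤ)
    (ha : 0 < a) (hamin : ∀ p ∈ A, p.1 ≠ 0 → a ≤ p.1)
    (ha' : ∀ p ∈ A, p.1 ≤ a')
    (hb : 0 < b) (hbmin : ∀ p ∈ A, p.2 ≠ 0 → b ≤ p.2)
    (hb' : ∀ p ∈ A, p.2 ≤ b')
    (hca : Int.gcd a a' = 1) (hcb : Int.gcd b b' = 1)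
    (hsub : ({((0:ℤ),(0:ℤ)), (a,0), (0,b), (a',0), (0,b'), (a,b), (a,b'), (a',b),
      (a',b')} : Finset (ℤ × ℤ)) ⊆ A) :
    (∀ k : ℕ, max (2*a'^2) (2*b'^2) ≤ (k : ℤ) →
      (iterSum k A + iterSum k A).card ≤ (iterSum k A - iterSum k A).card) ∧
    ¬ (∀ k : ℕ, 1 ≤ k →
      (iterSum k A - iterSum k A).card < (iterSum k A + iterSum k A).card) := by
  have hG : ({0, a, a'} : Finset ℤ) ×ˢ ({0, b, b'} : Finset ℤ) ⊆ A := fun ⟨x, y⟩ hp =>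
    hsub (by simp at hp ⊢; tauto)
  have haa' : a ≤ a' := ha' (a, 0) (hsub (by simp))
  have hbb' : b ≤ b' := hb' (0, b) (hsub (by simp))
  have hA : ∀ p ∈ A, (p.1 = 0 ∨ a ≤ p.1 ∧ p.1 ≤ a') ∧ (p.2 = 0 ∨ b ≤ p.2 ∧ p.2 ≤ b') :=
    fun p hp => ⟨(em _).imp_right fun h => ⟨hamin p hp h, ha' p hp⟩,
      (em _).imp_right fun h => ⟨hbmin p hp h, hb' p hp⟩⟩
  have hle (k : ℕ) (hk : max (2*a'^2) (2*b'^2) ≤ (k : ℤ)) :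
      (iterSum k A + iterSum k A).card ≤ (iterSum k A - iterSum k A).card := by
    rw [iterSum_eq_nsmul_s11]
    exact card_nsmul_add_le_card_nsmul_sub ha haa' (Int.isCoprime_iff_gcd_eq_one.mpr hca) hb hbb'
      (Int.isCoprime_iff_gcd_eq_one.mpr hcb) hA hG (le_of_max_le_left hk) (le_of_max_le_right hk)
  refine ⟨hle, fun hlt => ?_⟩
  obtain ⟨k, hk⟩ : ∃ k : ℕ, max (2*a'^2) (2*b'^2) = (k : ℤ) :=
    ⟨_, (Int.toNat_of_nonneg (by positivity)).symm⟩
  have hk₁ : 1 ≤ k := by have := le_max_left (2*a'^2) (2*b'^2); nlinarith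
  exact absurd (hle k hk.le) (hlt k hk₁).not_ge

theorem stmt11 (A : Finset (ℤ × ℤ)) (a a' b b' : ℤ)
    (hnn : ∀ p ∈ A, 0 ≤ p.1 ∧ 0 ≤ p.2)
    (ha : 0 < a) (hamin : ∀ p ∈ A, p.1 ≠ 0 → a ≤ p.1)
    (ha' : ∀ p ∈ A, p.1 ≤ a')
    (hb : 0 < b) (hbmin : ∀ p ∈ A, p.2 ≠ 0 → b ≤ p.2)
    (hb' : ∀ p ∈ A, p.2 ≤ b')
    (hca : Int.gcd a a' = 1) (hcb : Int.gcd b b' = 1)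
    (hsub : ({((0:ℤ),(0:ℤ)), (a,0), (0,b), (a',0), (0,b'), (a,b), (a,b'), (a',b),
      (a',b')} : Finset (ℤ × ℤ)) ⊆ A) :
    (∀ k : ℕ, max (2*a'^2) (2*b'^2) ≤ (k : ℤ) →
      (iterSum k A + iterSum k A).card ≤ (iterSum k A - iterSum k A).card) ∧
    ¬ (∀ k : ℕ, 1 ≤ k →
      (iterSum k A - iterSum k A).card < (iterSum k A + iterSum k A).card) :=
  stmt11_general A a a' b b' ha hamin ha' hb hbmin hb' hca hcb hsub
end
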